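/- arXiv:math/0609154 — 2 statements merged into one kernel-verified Lean document; each statement's English description precedes it below -/
import Mathlib

section
/- Let C_α : ℝ → ℝ be smooth (α = k+1,…,b), N a constant matrix, fix constants d_α, and suppose f : U ⊆ ℝ^{m−1} → ℝ is smooth and satisfies ∑_{α=k+1}^b N^α_1 C_{α−k}(N^α_1 f(q̄) + ∑_{l=1}^{m−1} N^α_{l+1} q̄^l + d_α) = 0 identically on U. Define Ḡ_j(q̄) = ∑_{α=k+1}^b N^α_{j+1} C_{α−k}(N^α_1 f(q̄) + ∑_l N^α_{l+1} q̄^l + d_α). Then ∂Ḡ_j/∂q̄^l = ∂Ḡ_l/∂q̄^j on U for all j, l = 1,…,m−1. -/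
theorem stmt_14 (k p m : ℕ) (N : Matrix (Fin (k + p)) (Fin (m + 1)) ℝ)
    (C : Fin p → ℝ → ℝ) (hC : ∀ α, ContDiff ℝ (⊤ : ℕ∞) (C α)) (d : Fin p → ℝ)
    (U : Set (Fin m → ℝ)) (hU : IsOpen U)
    (f : (Fin m → ℝ) → ℝ) (hf : ContDiffOn ℝ (⊤ : ℕ∞) f U)
    (hconstraint : ∀ q ∈ U, ∑ α : Fin p, N (Fin.natAdd k α) 0 *
      C α (N (Fin.natAdd k α) 0 * f q +
        (∑ l : Fin m, N (Fin.natAdd k α) l.succ * q l) + d α) = 0)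
    (G : Fin m → (Fin m → ℝ) → ℝ)
    (hG : ∀ j q, G j q = ∑ α : Fin p, N (Fin.natAdd k α) j.succ *
      C α (N (Fin.natAdd k α) 0 * f q +
        (∑ l : Fin m, N (Fin.natAdd k α) l.succ * q l) + d α)) :
    ∀ (j l : Fin m), ∀ q ∈ U,
      fderiv ℝ (G j) q (Pi.single l 1) = fderiv ℝ (G l) q (Pi.single j 1) := by
  classical
  intro j l q hq
  have hqn : U ∈ nhds q := hU.mem_nhds hq
  -- abbreviations
  set S : Fin p → ℝ := fun α => N (Fin.natAdd k α) 0 with hS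
  set b : Fin m → Fin p → ℝ := fun i α => N (Fin.natAdd k α) i.succ with hb
  set w : Fin p → (Fin m → ℝ) → ℝ := fun α v =>
    S α * f v + (∑ i : Fin m, b i α * v i) + d α with hwdef
  -- derivative of f
  have hfd : DifferentiableAt ℝ f q := (hf.contDiffAt hqn).differentiableAt (by simp)
  set Df := fderiv ℝ f q with hDfdef
  have hDf : HasFDerivAt f Df q := hfd.hasFDerivAt
  set a : Fin m → ℝ := fun i => Df (Pi.single i 1) with ha
  -- linear part
  set L : Fin p → (Fin m → ℝ) →L[ℝ] ℝ := fun α =>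
    ∑ i : Fin m, b i α • (ContinuousLinearMap.proj i :
      (Fin m → ℝ) →L[ℝ] ℝ) with hL
  have hLapp : ∀ α (v : Fin m → ℝ), L α v = ∑ i : Fin m, b i α * v i := by
    intro α v
    simp [hL]
  set Dw : Fin p → (Fin m → ℝ) →L[ℝ] ℝ := fun α => S α • Df + L α with hDw
  have hwD : ∀ α, HasFDerivAt (w α) (Dw α) q := by
    intro α
    have h1 : HasFDerivAt (fun v => S α * f v) (S α • Df) q := hDf.const_mul _
    have h2 : HasFDerivAt (fun v : Fin m → ℝ => ∑ i : Fin m, b i α * v i) (L α) q := by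
      have heq : (fun v : Fin m → ℝ => ∑ i : Fin m, b i α * v i) = L α :=
        funext fun v => (hLapp α v).symm
      rw [heq]
      exact (L α).hasFDerivAt
    exact (h1.add h2).add_const (d α)
  set c : Fin p → ℝ := fun α => deriv (C α) (w α q) with hc
  have hCw : ∀ α, HasFDerivAt (fun v => C α (w α v)) (c α • Dw α) q := by
    intro α
    exact (((hC α).differentiable (by simp) (w α q)).hasDerivAt).comp_hasFDerivAt q (hwD α)
  -- derivative of G j'
  have hGD : ∀ j' : Fin m, HasFDerivAt (G j')
      (∑ α : Fin p, b j' α • (c α • Dw α)) q := by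
    intro j'
    have heq : G j' = fun v => ∑ α : Fin p, b j' α * C α (w α v) :=
      funext fun v => hG j' v
    rw [heq]
    exact HasFDerivAt.fun_sum fun α _ => (hCw α).const_mul (b j' α)
  -- derivative of constraint is zero
  have hHD : HasFDerivAt (fun v => ∑ α : Fin p, S α * C α (w α v))
      (∑ α : Fin p, S α • (c α • Dw α)) q :=
    HasFDerivAt.fun_sum fun α _ => (hCw α).const_mul (S α)
  have hev : (fun v => ∑ α : Fin p, S α * C α (w α v)) =ᶠ[nhds q] fun _ => (0 : ℝ) :=
    Filter.eventuallyEq_of_mem hqn hconstraint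
  have hH0 : HasFDerivAt (fun v => ∑ α : Fin p, S α * C α (w α v))
      (0 : (Fin m → ℝ) →L[ℝ] ℝ) q :=
    (hasFDerivAt_const (0 : ℝ) q).congr_of_eventuallyEq hev
  have hzero : (∑ α : Fin p, S α • (c α • Dw α)) = 0 := hHD.unique hH0
  -- evaluate Dw at Pi.single
  have hDwapp : ∀ α (i : Fin m), Dw α (Pi.single i 1) = S α * a i + b i α := by
    intro α i
    have : L α (Pi.single i 1) = b i α := by
      rw [hLapp]
      simp [Pi.single_apply, mul_ite, Finset.sum_ite_eq']
    simp [hDw, this, ha, smul_eq_mul]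
  -- constraint relation
  have hrel : ∀ i : Fin m, ∑ α : Fin p, S α * (c α * (S α * a i + b i α)) = 0 := by
    intro i
    have := congrArg (fun (T : (Fin m → ℝ) →L[ℝ] ℝ) => T (Pi.single i 1)) hzero
    simpa [ContinuousLinearMap.sum_apply, ContinuousLinearMap.smul_apply,
      smul_eq_mul, hDwapp] using this
  -- rewrite the goal
  have hGeval : ∀ (x y : Fin m), fderiv ℝ (G x) q (Pi.single y 1)
      = ∑ α : Fin p, b x α * (c α * (S α * a y + b y α)) := by
    intro x y
    rw [(hGD x).fderiv]
    simp [ContinuousLinearMap.sum_apply, ContinuousLinearMap.smul_apply,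
      smul_eq_mul, hDwapp]
  rw [hGeval, hGeval]
  -- algebra
  have expand : ∀ (x y : Fin m), (∑ α : Fin p, b x α * (c α * (S α * a y + b y α)))
      = a y * (∑ α : Fin p, S α * c α * b x α) + ∑ α : Fin p, b x α * c α * b y α := by
    intro x y
    rw [Finset.mul_sum, ← Finset.sum_add_distrib]
    exact Finset.sum_congr rfl fun α _ => by ring
  have hP : ∀ x : Fin m, (∑ α : Fin p, S α * c α * b x α)
      = -(a x * ∑ α : Fin p, S α * c α * S α) := by
    intro x
    have h := hrel x
    have h2 : (∑ α : Fin p, S α * (c α * (S α * a x + b x α)))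
        = a x * (∑ α : Fin p, S α * c α * S α) + ∑ α : Fin p, S α * c α * b x α := by
      rw [Finset.mul_sum, ← Finset.sum_add_distrib]
      exact Finset.sum_congr rfl fun α _ => by ring
    rw [h2] at h
    linarith
  have hQ : (∑ α : Fin p, b j α * c α * b l α) = ∑ α : Fin p, b l α * c α * b j α :=
    Finset.sum_congr rfl fun α _ => by ring
  rw [expand, expand, hP, hP, hQ]
  ring
end

section
/- Let L₁, L₂ : ℝ → ℝ \ {0} be continuous, f : ℝ → ℝ smooth with d²f/dt² not identically zero, and C₂ : ℝ → ℝ \ {0}. Suppose E : ℝ × ℝ² × ℝ² → ℝ is C² and satisfies for all (t,q,v): ∂E/∂v¹ = L₁(v¹) + L₂(−v¹ + f'(t)) and ∂E/∂q¹ = −L₂(−v¹ + f'(t))·f''(t) + C₂(q¹−q²+d). If L₂ is non-constant, a contradiction follows; hence no such E exists. -/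
theorem stmt_18 (L₁ L₂ C₂ : ℝ → ℝ)
    (hL₁c : Continuous L₁) (hL₂c : Continuous L₂)
    (hL₁0 : ∀ x, L₁ x ≠ 0) (hL₂0 : ∀ x, L₂ x ≠ 0) (hC₂0 : ∀ x, C₂ x ≠ 0)
    (hL₂nc : ∃ x y, L₂ x ≠ L₂ y)
    (f : ℝ → ℝ) (hf : ContDiff ℝ (⊤ : ℕ∞) f) (hf'' : ∃ t, deriv (deriv f) t ≠ 0)
    (d : ℝ) :
    ¬∃ E : ℝ × (Fin 2 → ℝ) × (Fin 2 → ℝ) → ℝ, ContDiff ℝ 2 E ∧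
      ∀ (t : ℝ) (q v : Fin 2 → ℝ),
        fderiv ℝ (fun v' => E (t, q, v')) v (Pi.single 0 1) =
          L₁ (v 0) + L₂ (-(v 0) + deriv f t) ∧
        fderiv ℝ (fun q' => E (t, q', v)) q (Pi.single 0 1) =
          -(L₂ (-(v 0) + deriv f t)) * deriv (deriv f) t + C₂ (q 0 - q 1 + d) := by
  rintro ⟨E, hE, hEeq⟩
  obtain ⟨t₀, ht₀⟩ := hf''
  obtain ⟨a, b, hab⟩ := hL₂nc
  set G : ((Fin 2 → ℝ) × (Fin 2 → ℝ)) → ℝ := fun p => E (t₀, p.1, p.2) with hGdef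
  have hGc : ContDiff ℝ 2 G := hE.comp (ContDiff.prodMk (contDiff_const (c := t₀)) contDiff_id)
  have hGd : Differentiable ℝ G := hGc.differentiable (by norm_num)
  have hG' : Differentiable ℝ (fderiv ℝ G) :=
    (hGc.fderiv_right (m := 1) le_rfl).differentiable one_ne_zero
  have hsym : ∀ (y : ((Fin 2 → ℝ) × (Fin 2 → ℝ))) (u w : ((Fin 2 → ℝ) × (Fin 2 → ℝ))),
      fderiv ℝ (fderiv ℝ G) y u w = fderiv ℝ (fderiv ℝ G) y w u := by
    intro y u w
    exact second_derivative_symmetric (fun z => (hGd z).hasFDerivAt)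
      ((hG' y).hasFDerivAt) u w
  set eq : ((Fin 2 → ℝ) × (Fin 2 → ℝ)) := ((Pi.single 0 1 : Fin 2 → ℝ), (0 : Fin 2 → ℝ)) with heqdef
  set ev : ((Fin 2 → ℝ) × (Fin 2 → ℝ)) := ((0 : Fin 2 → ℝ), (Pi.single 0 1 : Fin 2 → ℝ)) with hevdef
  -- the value of DG in the v-direction
  have keyv : ∀ p : (Fin 2 → ℝ) × (Fin 2 → ℝ), fderiv ℝ G p ev = L₁ (p.2 0) + L₂ (-(p.2 0) + deriv f t₀) := by
    intro p
    have h := (hEeq t₀ p.1 p.2).1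
    have hj : HasFDerivAt (fun v' : Fin 2 → ℝ => ((p.1, v') : ((Fin 2 → ℝ) × (Fin 2 → ℝ))))
        (((0 : (Fin 2 → ℝ) →L[ℝ] (Fin 2 → ℝ))).prod (ContinuousLinearMap.id ℝ _)) p.2 :=
      HasFDerivAt.prodMk (hasFDerivAt_const _ _) (hasFDerivAt_id _)
    have hcomp : HasFDerivAt (fun v' : Fin 2 → ℝ => E (t₀, p.1, v'))
        ((fderiv ℝ G p).comp
          (((0 : (Fin 2 → ℝ) →L[ℝ] (Fin 2 → ℝ))).prod (ContinuousLinearMap.id ℝ _))) p.2 :=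
      ((hGd (p.1, p.2)).hasFDerivAt).comp p.2 hj
    rw [hcomp.fderiv] at h
    simpa using h
  -- the value of DG in the q-direction
  have keyq : ∀ p : (Fin 2 → ℝ) × (Fin 2 → ℝ), fderiv ℝ G p eq =
      -(L₂ (-(p.2 0) + deriv f t₀)) * deriv (deriv f) t₀ + C₂ (p.1 0 - p.1 1 + d) := by
    intro p
    have h := (hEeq t₀ p.1 p.2).2
    have hj : HasFDerivAt (fun q' : Fin 2 → ℝ => ((q', p.2) : ((Fin 2 → ℝ) × (Fin 2 → ℝ))))
        ((ContinuousLinearMap.id ℝ _).prod (0 : (Fin 2 → ℝ) →L[ℝ] (Fin 2 → ℝ))) p.1 :=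
      HasFDerivAt.prodMk (hasFDerivAt_id _) (hasFDerivAt_const _ _)
    have hcomp : HasFDerivAt (fun q' : Fin 2 → ℝ => E (t₀, q', p.2))
        ((fderiv ℝ G p).comp
          ((ContinuousLinearMap.id ℝ _).prod (0 : (Fin 2 → ℝ) →L[ℝ] (Fin 2 → ℝ)))) p.1 :=
      by have := ((hGd (p.1, p.2)).hasFDerivAt).comp p.1 hj; exact this
    rw [hcomp.fderiv] at h
    simpa using h
  -- derivative of s ↦ DG (y + s • u) w
  have hline : ∀ (y u w : ((Fin 2 → ℝ) × (Fin 2 → ℝ))) (s : ℝ),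
      HasDerivAt (fun s : ℝ => fderiv ℝ G (y + s • u) w)
        (fderiv ℝ (fderiv ℝ G) (y + s • u) u w) s := by
    intro y u w s
    have hℓ : HasDerivAt (fun s : ℝ => y + s • u) u s := by
      simpa using ((hasDerivAt_id s).smul_const u).const_add y
    have h1 : HasDerivAt (fun s : ℝ => fderiv ℝ G (y + s • u))
        (fderiv ℝ (fderiv ℝ G) (y + s • u) u) s :=
      ((hG' (y + s • u)).hasFDerivAt).comp_hasDerivAt s hℓ
    have h2 := ((ContinuousLinearMap.apply ℝ ℝ w).hasFDerivAt).comp_hasDerivAt s h1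
    exact h2
  -- D²G y eq ev = 0 since DG · ev does not depend on q
  have hA : ∀ y : ((Fin 2 → ℝ) × (Fin 2 → ℝ)), fderiv ℝ (fderiv ℝ G) y eq ev = 0 := by
    intro y
    have hconst : (fun s : ℝ => fderiv ℝ G (y + s • eq) ev)
        = fun _ : ℝ => L₁ (y.2 0) + L₂ (-(y.2 0) + deriv f t₀) := by
      funext s
      rw [keyv]
      simp [heqdef, Prod.snd_add, Prod.smul_snd]
    have h1 := hline y eq ev 0
    rw [hconst] at h1
    have h2 : HasDerivAt (fun _ : ℝ => L₁ (y.2 0) + L₂ (-(y.2 0) + deriv f t₀))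
        (0 : ℝ) 0 := hasDerivAt_const _ _
    have := h1.unique h2
    simpa using this
  -- hence D²G y ev eq = 0 by symmetry
  have hB : ∀ y : ((Fin 2 → ℝ) × (Fin 2 → ℝ)), fderiv ℝ (fderiv ℝ G) y ev eq = 0 := by
    intro y; rw [hsym y ev eq]; exact hA y
  -- so s ↦ DG (x₀ + s • ev) eq is constant
  set x₀ : ((Fin 2 → ℝ) × (Fin 2 → ℝ)) := ((0 : Fin 2 → ℝ), (0 : Fin 2 → ℝ)) with hx₀
  have hφd : Differentiable ℝ (fun s : ℝ => fderiv ℝ G (x₀ + s • ev) eq) :=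
    fun s => (hline x₀ ev eq s).differentiableAt
  have hφ0 : ∀ s : ℝ, deriv (fun s : ℝ => fderiv ℝ G (x₀ + s • ev) eq) s = 0 := by
    intro s
    rw [(hline x₀ ev eq s).deriv]
    exact hB _
  have hconst : ∀ s : ℝ, fderiv ℝ G (x₀ + s • ev) eq = fderiv ℝ G (x₀ + (0:ℝ) • ev) eq :=
    fun s => is_const_of_deriv_eq_zero hφd hφ0 s 0
  have hval : ∀ s : ℝ, fderiv ℝ G (x₀ + s • ev) eq =
      -(L₂ (-s + deriv f t₀)) * deriv (deriv f) t₀ + C₂ (0 - 0 + d) := by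
    intro s
    rw [keyq]
    simp [hx₀, hevdef, Prod.smul_fst, Prod.smul_snd, Pi.single_eq_same]
  have hL₂const : ∀ s : ℝ, L₂ (-s + deriv f t₀) = L₂ (deriv f t₀) := by
    intro s
    have h := hconst s
    rw [hval s, hval 0] at h
    rw [neg_mul, neg_mul] at h
    simp only [neg_zero, zero_add] at h
    have h2 : L₂ (-s + deriv f t₀) * deriv (deriv f) t₀
        = L₂ (deriv f t₀) * deriv (deriv f) t₀ := by linarith
    exact mul_right_cancel₀ ht₀ h2
  apply hab
  have ha := hL₂const (deriv f t₀ - a)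
  have hb := hL₂const (deriv f t₀ - b)
  rw [show -(deriv f t₀ - a) + deriv f t₀ = a by ring] at ha
  rw [show -(deriv f t₀ - b) + deriv f t₀ = b by ring] at hb
  rw [ha, hb]
end
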